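/- A quasi-median graph is a median graph if and only if it is triangle-free, which holds if and only if every hyperplane delimits exactly two sectors. In particular: in a quasi-median graph, every hyperplane of the graph delimits exactly two sectors if and only if the graph contains no triangle. -/

import Mathlib

open SimpleGraph

variable {V : Type*}

/-- Triangle condition of weak modularity. -/
def TriangleCond (X : SimpleGraph V) : Prop :=
  ∀ o x y : V, X.Adj x y → X.dist o x = X.dist o y →
    ∃ w : V, X.Adj w x ∧ X.Adj w y ∧ X.dist o w + 1 = X.dist o x

/-- Quadrangle condition of weak modularity. -/
def QuadCond (X : SimpleGraph V) : Prop :=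
  ∀ o x y z : V, X.Adj z x → X.Adj z y → X.dist x y = 2 →
    X.dist o z = X.dist o x + 1 → X.dist o z = X.dist o y + 1 →
    ∃ w : V, X.Adj w x ∧ X.Adj w y ∧ X.dist o w + 2 = X.dist o z

/-- No induced copy of the complete bipartite graph `K_{2,3}`. -/
def NoInducedK23 (X : SimpleGraph V) : Prop :=
  ¬ ∃ a b x y z : V, a ≠ b ∧ x ≠ y ∧ y ≠ z ∧ x ≠ z ∧
    X.Adj a x ∧ X.Adj a y ∧ X.Adj a z ∧ X.Adj b x ∧ X.Adj b y ∧ X.Adj b z ∧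
    ¬ X.Adj a b ∧ ¬ X.Adj x y ∧ ¬ X.Adj y z ∧ ¬ X.Adj x z

/-- No induced copy of `K₄` minus an edge. -/
def NoInducedK4minus (X : SimpleGraph V) : Prop :=
  ¬ ∃ a b c d : V, X.Adj a b ∧ X.Adj a c ∧ X.Adj a d ∧ X.Adj b c ∧ X.Adj b d ∧
    c ≠ d ∧ ¬ X.Adj c d

/-- A quasi-median graph: a connected weakly modular graph with no induced
`K_{2,3}` and no induced `K₄⁻`. -/
def QuasiMedian (X : SimpleGraph V) : Prop :=
  X.Connected ∧ TriangleCond X ∧ QuadCond X ∧ NoInducedK23 X ∧ NoInducedK4minus X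

/-- `m` lies on a geodesic from `a` to `b`. -/
def InInterval (X : SimpleGraph V) (a m b : V) : Prop :=
  X.dist a m + X.dist m b = X.dist a b

/-- `m` is a median of the triple `a, b, c`. -/
def IsMedianOf (X : SimpleGraph V) (m a b c : V) : Prop :=
  InInterval X a m b ∧ InInterval X b m c ∧ InInterval X a m c

/-- A median graph: connected, and every triple of vertices has a unique median. -/
def MedianGraph (X : SimpleGraph V) : Prop :=
  X.Connected ∧ ∀ a b c : V, ∃! m : V, IsMedianOf X m a b c

/-- The elementary relation on edges generating hyperplanes: two edges of a common
triangle, or opposite edges of an induced 4-cycle. -/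
def EdgeRel (X : SimpleGraph V) (e f : Sym2 V) : Prop :=
  (∃ a b c : V, X.Adj a b ∧ X.Adj b c ∧ X.Adj a c ∧ e = s(a, b) ∧ f = s(b, c)) ∨
  (∃ a b c d : V, X.Adj a b ∧ X.Adj b c ∧ X.Adj c d ∧ X.Adj d a ∧
    a ≠ c ∧ ¬ X.Adj a c ∧ b ≠ d ∧ ¬ X.Adj b d ∧ e = s(a, b) ∧ f = s(c, d))

/-- A hyperplane: an equivalence class of edges under the reflexive-transitive
closure of `EdgeRel`. -/
def IsHyperplane (X : SimpleGraph V) (J : Set (Sym2 V)) : Prop :=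
  ∃ e ∈ X.edgeSet, J = {f | Relation.ReflTransGen (EdgeRel X) e f}

/-- The hyperplane `J` separates `x` and `y`. -/
def SeparatesPts (X : SimpleGraph V) (J : Set (Sym2 V)) (x y : V) : Prop :=
  ¬ (X.deleteEdges J).Reachable x y

/-- A sector delimited by `J`: a connected component of `X` minus the edges of `J`. -/
def IsSectorOf (X : SimpleGraph V) (J : Set (Sym2 V)) (S : Set V) : Prop :=
  ∃ v : V, S = {w | (X.deleteEdges J).Reachable v w}

/-- A gated subset of vertices. -/
def IsGated (X : SimpleGraph V) (Y : Set V) : Prop :=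
  Y.Nonempty ∧ ∀ x : V, ∃ y ∈ Y, ∀ z ∈ Y, X.dist x z = X.dist x y + X.dist y z

/-- The gated hull of a set of vertices. -/
def GatedHull (X : SimpleGraph V) (A : Set V) : Set V :=
  ⋂₀ {Y : Set V | IsGated X Y ∧ A ⊆ Y}

/-- A polytope: the gated hull of a non-empty finite set of vertices. -/
def IsPolytope (X : SimpleGraph V) (P : Set V) : Prop :=
  ∃ A : Finset V, A.Nonempty ∧ P = GatedHull X (A : Set V)

/-- `HypOf X Y`: the hyperplanes separating two vertices of `Y` (the hyperplanes
crossing `Y`). -/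
def HypOf (X : SimpleGraph V) (Y : Set V) : Set (Set (Sym2 V)) :=
  {J | IsHyperplane X J ∧ ∃ a ∈ Y, ∃ b ∈ Y, SeparatesPts X J a b}

/-- The hyperplanes separating `A` from `B` (placing them in two distinct sectors). -/
def SepHyp (X : SimpleGraph V) (A B : Set V) : Set (Set (Sym2 V)) :=
  {J | IsHyperplane X J ∧ ∃ S T : Set V, IsSectorOf X J S ∧ IsSectorOf X J T ∧
    S ≠ T ∧ A ⊆ S ∧ B ⊆ T}

/-- The covering relation for polytopes: `P ⊊ Q` with no polytope strictly between. -/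
def PolyCover (X : SimpleGraph V) (P Q : Set V) : Prop :=
  IsPolytope X P ∧ IsPolytope X Q ∧ P ⊂ Q ∧
    ¬ ∃ R : Set V, IsPolytope X R ∧ P ⊂ R ∧ R ⊂ Q

abbrev PolyVert (X : SimpleGraph V) := {P : Set V // IsPolytope X P}

/-- The graph of polytopes: the covering graph of the inclusion poset of polytopes. -/
def PolyGraph (X : SimpleGraph V) : SimpleGraph (PolyVert X) where
  Adj P Q := PolyCover X P.val Q.val ∨ PolyCover X Q.val P.val
  symm := by constructor; intro P Q h; exact Or.symm h
  loopless := by constructor; intro P h; rcases h with h | h <;> exact (ssubset_irrefl P.val) h.2.2.1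

/-- Two hyperplanes are transverse: there is an induced 4-cycle whose two pairs of
opposite edges belong respectively to the two hyperplanes. -/
def Transverse (X : SimpleGraph V) (J₁ J₂ : Set (Sym2 V)) : Prop :=
  ∃ a b c d : V, X.Adj a b ∧ X.Adj b c ∧ X.Adj c d ∧ X.Adj d a ∧
    a ≠ c ∧ ¬ X.Adj a c ∧ b ≠ d ∧ ¬ X.Adj b d ∧
    s(a, b) ∈ J₁ ∧ s(c, d) ∈ J₁ ∧ s(b, c) ∈ J₂ ∧ s(d, a) ∈ J₂

/-- A prism: a polytope whose crossing hyperplanes are pairwise transverse (this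
characterises the gated subgraphs decomposing as finite products of cliques). -/
def IsPrism (X : SimpleGraph V) (P : Set V) : Prop :=
  IsPolytope X P ∧ ∀ J₁ ∈ HypOf X P, ∀ J₂ ∈ HypOf X P, J₁ ≠ J₂ → Transverse X J₁ J₂

/-- The covering relation for prisms. -/
def PrismCover (X : SimpleGraph V) (P Q : Set V) : Prop :=
  IsPrism X P ∧ IsPrism X Q ∧ P ⊂ Q ∧
    ¬ ∃ R : Set V, IsPrism X R ∧ P ⊂ R ∧ R ⊂ Q

abbrev PrismVert (X : SimpleGraph V) := {P : Set V // IsPrism X P}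

/-- The graph of prisms. -/
def PrismGraph (X : SimpleGraph V) : SimpleGraph (PrismVert X) where
  Adj P Q := PrismCover X P.val Q.val ∨ PrismCover X Q.val P.val
  symm := by constructor; intro P Q h; exact Or.symm h
  loopless := by constructor; intro P h; rcases h with h | h <;> exact (ssubset_irrefl P.val) h.2.2.1

/-- A convex set of vertices: closed under taking points on geodesics. -/
def IsConvexSet (X : SimpleGraph V) (Y : Set V) : Prop :=
  ∀ a ∈ Y, ∀ b ∈ Y, ∀ m : V, InInterval X a m b → m ∈ Y

/-- The convex hull of a set of vertices. -/
def ConvHull (X : SimpleGraph V) (A : Set V) : Set V :=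
  ⋂₀ {Y : Set V | IsConvexSet X Y ∧ A ⊆ Y}

/-- The subgraph of `X` induced on `Y` (kept on the same vertex set). -/
def RestrictTo (X : SimpleGraph V) (Y : Set V) : SimpleGraph V where
  Adj a b := X.Adj a b ∧ a ∈ Y ∧ b ∈ Y
  symm := by constructor; intro a b h; exact ⟨h.1.symm, h.2.2, h.2.1⟩
  loopless := by constructor; intro a h; exact X.irrefl h.1
/-!
In a triangle-free weakly modular graph the distances from any vertex to the two ends of an
edge differ by exactly one, so an edge `ab` splits the vertices into the halfspaces
`W(a,b) = {x | d(x,a) < d(x,b)}` and `W(b,a)`. The quadrangle condition and the absence of an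
induced `K_{2,3}` show that opposite edges of an induced square define the same halfspaces, and
that every edge from `W(a,b)` to `W(b,a)` lies in the hyperplane of `ab`. So this hyperplane
consists exactly of the edges between the two halfspaces: its sectors are `W(a,b)` and `W(b,a)`.
Halfspaces are moreover convex, which makes medians unique; they exist because a vertex off every
geodesic between the other two has a neighbour closer to both (quadrangle condition again).

Conversely, a median graph has no triangle `abc`, since a median `m` would give
`2 (d(a,m) + d(b,m) + d(c,m)) = 3`. If there is a triangle, it lies in a maximal clique `C`. The
triangle condition and the absence of an induced `K₄⁻` give every vertex a gate in `C`, and an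
edge whose ends have different gates lies in the hyperplane of the edges of `C`. Removing that
hyperplane therefore preserves gates along paths, so the vertices of `C` lie in pairwise distinct
sectors: there are at least three.
-/

open Relation

section

variable {X : SimpleGraph V} {a b c m x y z : V}

theorem SimpleGraph.Adj.dist_le_dist_add_one (h : X.Adj x y) (o : V) :
    X.dist o x ≤ X.dist o y + 1 := by
  rcases h.symm.diff_dist_adj (u := o) with h' | h' | h' <;> omega

theorem SimpleGraph.Adj.dist_le_dist_add_one' (h : X.Adj x y) (o : V) :
    X.dist x o ≤ X.dist y o + 1 := by
  rw [dist_comm, dist_comm (u := y)]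
  exact h.dist_le_dist_add_one o

theorem SimpleGraph.Connected.exists_adj_dist_eq_of_dist_eq_add_one (hc : X.Connected) {n : ℕ}
    (h : X.dist x y = n + 1) : ∃ z, X.Adj x z ∧ X.dist z y = n := by
  obtain ⟨p, hp⟩ := hc.exists_walk_length_eq_dist x y
  cases p with
  | nil => simp at h
  | @cons _ z _ hxz q =>
    refine ⟨z, hxz, le_antisymm ?_ ?_⟩
    · have := dist_le q
      simp only [Walk.length_cons] at hp
      omega
    · have := hc.dist_triangle (u := x) (v := z) (w := y)
      have := dist_eq_one_iff_adj.2 hxz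
      omega

theorem SimpleGraph.Connected.dist_eq_two (hc : X.Connected) (hxy : X.Adj x y) (hyz : X.Adj y z)
    (hne : x ≠ z) (hxz : ¬X.Adj x z) : X.dist x z = 2 := by
  have := hyz.symm.dist_le_dist_add_one x
  have := hc.pos_dist_of_ne hne
  have : X.dist x z ≠ 1 := fun h => hxz (dist_eq_one_iff_adj.1 h)
  have := dist_eq_one_iff_adj.2 hxy
  omega

theorem InInterval.trans (hc : X.Connected) {a' : V} (h₁ : InInterval X a a' b)
    (h₂ : InInterval X a' m b) : InInterval X a m b := by
  unfold InInterval at *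
  have := hc.dist_triangle (u := a) (v := a') (w := m)
  have := hc.dist_triangle (u := a) (v := m) (w := b)
  omega

theorem not_isMedianOf_of_adj (hab : X.Adj a b) (hbc : X.Adj b c) (hac : X.Adj a c) (m : V) :
    ¬IsMedianOf X m a b c := by
  rintro ⟨h₁, h₂, h₃⟩
  unfold InInterval at h₁ h₂ h₃
  rw [dist_eq_one_iff_adj.2 hab] at h₁
  rw [dist_eq_one_iff_adj.2 hbc] at h₂
  rw [dist_eq_one_iff_adj.2 hac] at h₃
  have := dist_comm (G := X) (u := m) (v := b)
  omega

theorem cliqueFree_three_of_not_exists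
    (h : ¬∃ a b c : V, X.Adj a b ∧ X.Adj b c ∧ X.Adj a c) : X.CliqueFree 3 := by
  classical
  intro s hs
  obtain ⟨a, b, c, hab, hac, hbc, -⟩ := is3Clique_iff.1 hs
  exact h ⟨a, b, c, hab, hbc, hac⟩

theorem SimpleGraph.CliqueFree.not_adj_of_adj_of_adj (hT : X.CliqueFree 3) (hab : X.Adj a b)
    (hbc : X.Adj b c) : ¬X.Adj a c := by
  classical
  exact fun hac => hT {a, b, c} (is3Clique_triple_iff.2 ⟨hab, hac, hbc⟩)

def IsInducedSquare (X : SimpleGraph V) (p q r s : V) : Prop :=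
  X.Adj p q ∧ X.Adj q r ∧ X.Adj r s ∧ X.Adj s p ∧
    p ≠ r ∧ ¬X.Adj p r ∧ q ≠ s ∧ ¬X.Adj q s

theorem IsInducedSquare.reverse {p q r s : V} (h : IsInducedSquare X p q r s) :
    IsInducedSquare X s r q p := by
  obtain ⟨hpq, hqr, hrs, hsp, hpr, hpr', hqs, hqs'⟩ := h
  exact ⟨hrs.symm, hqr.symm, hpq.symm, hsp.symm, hqs.symm, fun h => hqs' h.symm, hpr.symm,
    fun h => hpr' h.symm⟩

theorem IsInducedSquare.flip {p q r s : V} (h : IsInducedSquare X p q r s) :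
    IsInducedSquare X q p s r := by
  obtain ⟨hpq, hqr, hrs, hsp, hpr, hpr', hqs, hqs'⟩ := h
  exact ⟨hpq.symm, hsp.symm, hrs.symm, hqr.symm, hqs, hqs', hpr, hpr'⟩

theorem IsInducedSquare.edgeRel {p q r s : V} (h : IsInducedSquare X p q r s) :
    EdgeRel X s(p, q) s(r, s) :=
  let ⟨hpq, hqr, hrs, hsp, hpr, hpr', hqs, hqs'⟩ := h
  Or.inr ⟨p, q, r, s, hpq, hqr, hrs, hsp, hpr, hpr', hqs, hqs', rfl, rfl⟩

def hyperplane (X : SimpleGraph V) (e : Sym2 V) : Set (Sym2 V) :=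
  {f | ReflTransGen (EdgeRel X) e f}

theorem mem_hyperplane_self (e : Sym2 V) : e ∈ hyperplane X e := ReflTransGen.refl

def halfspace (X : SimpleGraph V) (a b : V) : Set V := {x | X.dist x a < X.dist x b}

theorem mem_halfspace : x ∈ halfspace X a b ↔ X.dist x a < X.dist x b := Iff.rfl

theorem self_mem_halfspace (hab : X.Adj a b) : a ∈ halfspace X a b := by
  rw [mem_halfspace, dist_self, dist_eq_one_iff_adj.2 hab]
  exact one_pos

theorem notMem_halfspace_swap (hx : x ∈ halfspace X a b) : x ∉ halfspace X b a :=
  fun h => lt_asymm (mem_halfspace.1 hx) (mem_halfspace.1 h)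

theorem notMem_halfspace_of_inInterval (hc : X.Connected) (h : InInterval X x m y)
    (hx : x ∈ halfspace X a m) : y ∉ halfspace X a m := by
  intro hy
  unfold InInterval at h
  rw [mem_halfspace] at hx hy
  have := hc.dist_triangle (u := x) (v := a) (w := y)
  have := dist_comm (G := X) (u := a) (v := y)
  have := dist_comm (G := X) (u := m) (v := y)
  omega

section TriangleFree

variable (hT : X.CliqueFree 3) (hTC : TriangleCond X)

include hT hTC in
theorem dist_eq_add_one_or_of_adj (h : X.Adj x y) (o : V) :
    X.dist o y = X.dist o x + 1 ∨ X.dist o x = X.dist o y + 1 := by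
  by_cases heq : X.dist o x = X.dist o y
  · obtain ⟨w, hwx, hwy, -⟩ := hTC o x y h heq
    exact (hT.not_adj_of_adj_of_adj hwx h hwy).elim
  · have := h.dist_le_dist_add_one o
    have := h.symm.dist_le_dist_add_one o
    omega

include hT hTC in
theorem dist_eq_add_one_of_mem_halfspace (hab : X.Adj a b) (hx : x ∈ halfspace X a b) :
    X.dist x b = X.dist x a + 1 := by
  have := dist_eq_add_one_or_of_adj hT hTC hab x
  rw [mem_halfspace] at hx
  omega

include hT hTC in
theorem mem_halfspace_swap_iff (hab : X.Adj a b) :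
    x ∈ halfspace X b a ↔ x ∉ halfspace X a b := by
  have := dist_eq_add_one_or_of_adj hT hTC hab x
  simp only [mem_halfspace]
  omega

variable (hQC : QuadCond X) (hK23 : NoInducedK23 X) (hc : X.Connected)

include hT hTC hQC hK23 hc in
theorem halfspace_subset_of_isInducedSquare {p q r s : V} (h : IsInducedSquare X p q r s) :
    halfspace X p q ⊆ halfspace X s r := by
  obtain ⟨hpq, hqr, hrs, hsp, hpr, hpr', hqs, hqs'⟩ := h
  intro t ht
  have htq := dist_eq_add_one_of_mem_halfspace hT hTC hpq ht
  rw [mem_halfspace]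
  rcases dist_eq_add_one_or_of_adj hT hTC hsp t with hs | hs <;>
    rcases dist_eq_add_one_or_of_adj hT hTC hqr t with hr | hr
  all_goals try omega
  -- `t` sees `p` and `r` at the same distance below `q`; the quadrangle condition then yields a
  -- common neighbour `w` of `p` and `r`, and `p, r ; q, s, w` is an induced `K_{2,3}`.
  obtain ⟨w, hwp, hwr, hw⟩ :=
    hQC t p r q hpq.symm hqr (hc.dist_eq_two hpq hqr hpr hpr') (by omega) (by omega)
  refine (hK23 ⟨p, r, q, s, w, hpr, hqs, ?_, ?_, hpq, hsp.symm, hwp.symm, hqr.symm, hrs,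
    hwr.symm, hpr', hqs', hT.not_adj_of_adj_of_adj hsp hwp.symm,
    hT.not_adj_of_adj_of_adj hpq.symm hwp.symm⟩).elim
  · rintro rfl; omega
  · rintro rfl; omega

include hT hTC hQC hK23 hc in
theorem halfspace_eq_of_isInducedSquare {p q r s : V} (h : IsInducedSquare X p q r s) :
    halfspace X p q = halfspace X s r :=
  (halfspace_subset_of_isInducedSquare hT hTC hQC hK23 hc h).antisymm
    (halfspace_subset_of_isInducedSquare hT hTC hQC hK23 hc h.reverse)

include hT hTC hQC hK23 hc in
theorem exists_halfspace_eq_of_mem_hyperplane {f : Sym2 V}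
    (hf : f ∈ hyperplane X s(a, b)) :
    ∃ u v, f = s(u, v) ∧ halfspace X u v = halfspace X a b := by
  induction hf with
  | refl => exact ⟨a, b, rfl, rfl⟩
  | tail _ hrel ih =>
    obtain ⟨u, v, rfl, huv⟩ := ih
    rcases hrel with ⟨x, y, z, hxy, hyz, hxz, -, -⟩ |
      ⟨p, q, r, s, hpq, hqr, hrs, hsp, hpr, hpr', hqs, hqs', he, rfl⟩
    · exact (hT.not_adj_of_adj_of_adj hxy hyz hxz).elim
    · have hsq : IsInducedSquare X p q r s := ⟨hpq, hqr, hrs, hsp, hpr, hpr', hqs, hqs'⟩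
      rcases Sym2.eq_iff.1 he with ⟨rfl, rfl⟩ | ⟨rfl, rfl⟩
      · exact ⟨s, r, Sym2.eq_swap,
          (halfspace_eq_of_isInducedSquare hT hTC hQC hK23 hc hsq).symm.trans huv⟩
      · exact ⟨r, s, rfl,
          (halfspace_eq_of_isInducedSquare hT hTC hQC hK23 hc hsq.flip).symm.trans huv⟩

include hT hTC hQC hK23 hc in
theorem halfspace_eq_of_mem_hyperplane (hf : s(x, y) ∈ hyperplane X s(a, b))
    (hx : x ∈ halfspace X a b) : halfspace X x y = halfspace X a b := by
  obtain ⟨u, v, he, huv⟩ := exists_halfspace_eq_of_mem_hyperplane hT hTC hQC hK23 hc hf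
  rcases Sym2.eq_iff.1 he with ⟨rfl, rfl⟩ | ⟨rfl, rfl⟩
  · exact huv
  · rw [← huv, mem_halfspace, dist_self] at hx
    exact absurd hx (Nat.not_lt_zero _)

include hT hTC hQC hK23 hc in
theorem notMem_halfspace_of_mem_hyperplane (hf : s(x, y) ∈ hyperplane X s(a, b))
    (hx : x ∈ halfspace X a b) : y ∉ halfspace X a b := by
  rw [← halfspace_eq_of_mem_hyperplane hT hTC hQC hK23 hc hf hx, mem_halfspace, dist_self]
  exact Nat.not_lt_zero _

include hT hTC hQC hc in
theorem mem_hyperplane_of_mem_halfspace (hab : X.Adj a b) (hxy : X.Adj x y)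
    (hx : x ∈ halfspace X a b) (hy : y ∈ halfspace X b a) :
    s(x, y) ∈ hyperplane X s(a, b) := by
  obtain ⟨n, hn⟩ : ∃ n, X.dist x a = n := ⟨_, rfl⟩
  induction n generalizing x y with
  | zero =>
    obtain rfl := hc.dist_eq_zero_iff.1 hn
    rw [mem_halfspace, dist_eq_one_iff_adj.2 hxy.symm] at hy
    obtain rfl := hc.dist_eq_zero_iff.1 (by omega : X.dist y b = 0)
    exact mem_hyperplane_self _
  | succ k ih =>
    have hxb := dist_eq_add_one_of_mem_halfspace hT hTC hab hx
    have hya := dist_eq_add_one_of_mem_halfspace hT hTC hab.symm hy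
    have := hxy.dist_le_dist_add_one' b
    have := hxy.symm.dist_le_dist_add_one' a
    obtain ⟨x', hxx', hx'a⟩ := hc.exists_adj_dist_eq_of_dist_eq_add_one hn
    have := hxx'.dist_le_dist_add_one' b
    have := hab.symm.dist_le_dist_add_one x'
    have hx' : x' ∈ halfspace X a b := by rw [mem_halfspace]; omega
    have hx'_ne : x' ≠ y := by rintro rfl; omega
    have hx'_nadj : ¬X.Adj x' y := fun h => by have := h.symm.dist_le_dist_add_one' a; omega
    have := dist_comm (G := X) (u := b) (v := x)
    have := dist_comm (G := X) (u := b) (v := x')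
    have := dist_comm (G := X) (u := b) (v := y)
    -- the quadrangle condition at `b` gives the edge `x' w` of the square `x' w y x`,
    -- one step closer to `a b`
    obtain ⟨w, hwx', hwy, hw⟩ :=
      hQC b x' y x hxx' hxy (hc.dist_eq_two hxx'.symm hxy hx'_ne hx'_nadj) (by omega) (by omega)
    have := dist_comm (G := X) (u := b) (v := w)
    have := hwy.symm.dist_le_dist_add_one' a
    have hw : w ∈ halfspace X b a := by rw [mem_halfspace]; omega
    have hw_ne : w ≠ x := by rintro rfl; omega
    have hw_nadj : ¬X.Adj w x := fun h => by have := h.symm.dist_le_dist_add_one' b; omega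
    have hsq : IsInducedSquare X x' w y x :=
      ⟨hwx'.symm, hwy, hxy.symm, hxx', hx'_ne, hx'_nadj, hw_ne, hw_nadj⟩
    rw [Sym2.eq_swap (a := x)]
    exact (ih hwx'.symm hx' hw hx'a).tail hsq.edgeRel

include hT hTC hQC hK23 hc in
theorem isConvexSet_halfspace (hab : X.Adj a b) : IsConvexSet X (halfspace X a b) := by
  intro x hx y hy m hm
  obtain ⟨n, hn⟩ : ∃ n, X.dist x m = n := ⟨_, rfl⟩
  induction n generalizing x with
  | zero => rwa [← hc.dist_eq_zero_iff.1 hn]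
  | succ k ih =>
    obtain ⟨x₁, hxx₁, hx₁m⟩ := hc.exists_adj_dist_eq_of_dist_eq_add_one hn
    have := hc.dist_triangle (u := x₁) (v := m) (w := y)
    have := hxx₁.dist_le_dist_add_one' y
    unfold InInterval at hm
    refine ih x₁ ?_ (by unfold InInterval; omega) hx₁m
    by_contra hx₁
    rw [← mem_halfspace_swap_iff hT hTC hab] at hx₁
    have hH := halfspace_eq_of_mem_hyperplane hT hTC hQC hK23 hc
      (mem_hyperplane_of_mem_halfspace hT hTC hQC hc hab hxx₁ hx hx₁) hx
    rw [← hH, mem_halfspace, dist_comm, dist_comm (u := y)] at hy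
    omega

include hT hTC hQC hK23 hc in
theorem reachable_deleteEdges_of_mem_halfspace (hab : X.Adj a b) (hx : x ∈ halfspace X a b) :
    (X.deleteEdges (hyperplane X s(a, b))).Reachable a x := by
  obtain ⟨n, hn⟩ : ∃ n, X.dist x a = n := ⟨_, rfl⟩
  induction n generalizing x with
  | zero =>
    obtain rfl := hc.dist_eq_zero_iff.1 hn
    rfl
  | succ k ih =>
    obtain ⟨x₁, hxx₁, hx₁a⟩ := hc.exists_adj_dist_eq_of_dist_eq_add_one hn
    have hx₁ : x₁ ∈ halfspace X a b := by
      have := hxx₁.dist_le_dist_add_one' b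
      rw [mem_halfspace] at hx ⊢
      omega
    have hstep : (X.deleteEdges (hyperplane X s(a, b))).Adj x₁ x :=
      (deleteEdges_adj ..).2 ⟨hxx₁.symm,
        fun hJ => notMem_halfspace_of_mem_hyperplane hT hTC hQC hK23 hc hJ hx₁ hx⟩
    exact (ih hx₁ hx₁a).trans hstep.reachable

include hT hTC hQC hc in
theorem mem_halfspace_iff_of_reachable_deleteEdges (hab : X.Adj a b)
    (h : (X.deleteEdges (hyperplane X s(a, b))).Reachable x y) :
    x ∈ halfspace X a b ↔ y ∈ halfspace X a b := by
  obtain ⟨w⟩ := h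
  induction w with
  | nil => rfl
  | @cons x y z hxy _ ih =>
    refine Iff.trans ?_ ih
    obtain ⟨hxy, hJ⟩ := (deleteEdges_adj ..).1 hxy
    constructor
    · intro hx
      by_contra hy
      rw [← mem_halfspace_swap_iff hT hTC hab] at hy
      exact hJ (mem_hyperplane_of_mem_halfspace hT hTC hQC hc hab hxy hx hy)
    · intro hy
      by_contra hx
      rw [← mem_halfspace_swap_iff hT hTC hab] at hx
      have hyx := mem_hyperplane_of_mem_halfspace hT hTC hQC hc hab hxy.symm hy hx
      rw [Sym2.eq_swap (a := y)] at hyx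
      exact hJ hyx

include hT hTC hQC hK23 hc in
theorem exists_sectors_eq_pair {J : Set (Sym2 V)} (hJ : IsHyperplane X J) :
    ∃ S₁ S₂ : Set V, S₁ ≠ S₂ ∧ {S : Set V | IsSectorOf X J S} = {S₁, S₂} := by
  obtain ⟨e, he, rfl⟩ := hJ
  induction e using Sym2.ind with | _ a b => ?_
  have hab : X.Adj a b := he
  have hJ_swap : hyperplane X s(b, a) = hyperplane X s(a, b) := by rw [Sym2.eq_swap]
  set R := (X.deleteEdges (hyperplane X s(a, b))).Reachable
  have sector_eq : ∀ {u v}, R u v → {w | R v w} = {w | R u w} :=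
    fun huv => Set.ext fun _ => ⟨huv.trans, huv.symm.trans⟩
  refine ⟨{w | R a w}, {w | R b w}, fun h => ?_, Set.ext fun S => ⟨?_, ?_⟩⟩
  · have hRab : b ∈ {w | R a w} := h ▸ Reachable.refl b
    exact notMem_halfspace_swap (self_mem_halfspace hab.symm)
      ((mem_halfspace_iff_of_reachable_deleteEdges hT hTC hQC hc hab hRab).1
        (self_mem_halfspace hab))
  · rintro ⟨v, rfl⟩
    by_cases hv : v ∈ halfspace X a b
    · exact Or.inl (sector_eq (reachable_deleteEdges_of_mem_halfspace hT hTC hQC hK23 hc hab hv))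
    · rw [← mem_halfspace_swap_iff hT hTC hab] at hv
      have hbv := reachable_deleteEdges_of_mem_halfspace hT hTC hQC hK23 hc hab.symm hv
      rw [hJ_swap] at hbv
      exact Or.inr (sector_eq hbv)
  · rintro (rfl | rfl)
    exacts [⟨a, rfl⟩, ⟨b, rfl⟩]

include hT hTC hQC hc in
theorem exists_adj_inInterval_of_not_inInterval (h : ¬InInterval X b a c) :
    ∃ a', X.Adj a a' ∧ InInterval X a a' b ∧ InInterval X a a' c := by
  obtain ⟨n, hn⟩ : ∃ n, X.dist a c = n := ⟨_, rfl⟩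
  induction n generalizing a with
  | zero =>
    obtain rfl := hc.dist_eq_zero_iff.1 hn
    exact absurd (by simp [InInterval]) h
  | succ n ih =>
    obtain ⟨y, hay, hyc⟩ := hc.exists_adj_dist_eq_of_dist_eq_add_one hn
    have := dist_eq_one_iff_adj.2 hay
    have := dist_comm (G := X) (u := a) (v := b)
    have := dist_comm (G := X) (u := y) (v := b)
    unfold InInterval at h ⊢
    rcases dist_eq_add_one_or_of_adj hT hTC hay b with hby | hby
    · -- stepping towards `c` moves away from `b`: recurse from `y`, then use the quadrangle
      -- condition at `b` on the path `a y y'`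
      have := hc.dist_triangle (u := b) (v := a) (w := c)
      obtain ⟨y', hyy', hy'b, hy'c⟩ := ih (a := y) (by unfold InInterval; omega) hyc
      unfold InInterval at hy'b hy'c
      have := dist_eq_one_iff_adj.2 hyy'
      have := dist_comm (G := X) (u := y') (v := b)
      have hay'_ne : a ≠ y' := by rintro rfl; omega
      have hay'_nadj : ¬X.Adj a y' := fun h => by have := h.dist_le_dist_add_one' c; omega
      obtain ⟨w, hwa, hwy', hw⟩ :=
        hQC b a y' y hay.symm hyy' (hc.dist_eq_two hay hyy' hay'_ne hay'_nadj) (by omega) (by omega)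
      have := dist_eq_one_iff_adj.2 hwa.symm
      have := dist_comm (G := X) (u := w) (v := b)
      have := hwy'.dist_le_dist_add_one' c
      have := hwa.symm.dist_le_dist_add_one' c
      exact ⟨w, hwa.symm, by omega, by omega⟩
    · exact ⟨y, hay, by omega, by omega⟩

include hT hTC hQC hc in
theorem exists_isMedianOf (a b c : V) : ∃ m, IsMedianOf X m a b c := by
  obtain ⟨n, hn⟩ : ∃ n, X.dist a b + X.dist a c = n := ⟨_, rfl⟩
  induction n using Nat.strong_induction_on generalizing a with
  | _ n ih =>
  by_cases h : InInterval X b a c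
  · exact ⟨a, by simp [InInterval], h, by simp [InInterval]⟩
  · obtain ⟨a', haa', ha'b, ha'c⟩ := exists_adj_inInterval_of_not_inInterval hT hTC hQC hc h
    have := dist_eq_one_iff_adj.2 haa'
    obtain ⟨m, hm₁, hm₂, hm₃⟩ := ih _ (by unfold InInterval at ha'b ha'c; omega) a' rfl
    exact ⟨m, ha'b.trans hc hm₁, hm₂, ha'c.trans hc hm₃⟩

include hT hTC hQC hK23 hc in
theorem IsMedianOf.unique {m' : V} (hm : IsMedianOf X m a b c) (hm' : IsMedianOf X m' a b c) :
    m = m' := by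
  by_contra hne
  have := hc.pos_dist_of_ne hne
  obtain ⟨n, hmn, hnm'⟩ := hc.exists_adj_dist_eq_of_dist_eq_add_one (x := m) (y := m')
    (n := X.dist m m' - 1) (by omega)
  have hm'n : m' ∈ halfspace X n m := by
    rw [mem_halfspace, dist_comm, dist_comm (u := m')]
    omega
  -- of any two of `a, b, c`, exactly one lies on the side of `n`: not both, since `m` is
  -- between them, and not neither, since then `m'` would be on the side of `m` by convexity
  have key : ∀ {x y}, InInterval X x m y → InInterval X x m' y →
      (x ∈ halfspace X n m ↔ y ∉ halfspace X n m) := by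
    intro x y h h'
    refine ⟨notMem_halfspace_of_inInterval hc h, fun hy => by_contra fun hx => ?_⟩
    rw [← mem_halfspace_swap_iff hT hTC hmn.symm] at hx hy
    exact notMem_halfspace_swap
      (isConvexSet_halfspace hT hTC hQC hK23 hc hmn x hx y hy m' h') hm'n
  obtain ⟨h₁, h₂, h₃⟩ := hm
  obtain ⟨h₁', h₂', h₃'⟩ := hm'
  have := key h₁ h₁'
  have := key h₂ h₂'
  have := key h₃ h₃'
  tauto

include hT hTC hQC hK23 hc in
theorem medianGraph_of_cliqueFree_three : MedianGraph X :=
  ⟨hc, fun a b c =>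
    let ⟨m, hm⟩ := exists_isMedianOf hT hTC hQC hc a b c
    ⟨m, hm, fun _ hm' => (hm.unique hT hTC hQC hK23 hc hm').symm⟩⟩

end TriangleFree

section Gates

def IsGate (X : SimpleGraph V) (C : Set V) (x g : V) : Prop :=
  g ∈ C ∧ ∀ z ∈ C, z ≠ g → X.dist x z = X.dist x g + 1

variable {C : Set V} {g g' : V}

theorem IsGate.unique (hg : IsGate X C x g) (hg' : IsGate X C x g') : g = g' := by
  by_contra hne
  have := hg.2 g' hg'.1 (Ne.symm hne)
  have := hg'.2 g hg.1 hne
  omega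

theorem isGate_self (hC : X.IsClique C) (hx : x ∈ C) : IsGate X C x x :=
  ⟨hx, fun _ hz hzx => by rw [dist_self, dist_eq_one_iff_adj.2 (hC hx hz (Ne.symm hzx))]⟩

theorem IsGate.dist_eq_of_adj (hg : IsGate X C x g) (hg' : IsGate X C y g') (hxy : X.Adj x y)
    (hne : g ≠ g') : X.dist x g = X.dist y g' := by
  have := hg.2 g' hg'.1 (Ne.symm hne)
  have := hg'.2 g hg.1 hne
  have := hxy.dist_le_dist_add_one' g'
  have := hxy.symm.dist_le_dist_add_one' g
  omega

theorem IsGate.of_adj (hC : X.IsClique C) (hg : IsGate X C x g) (hxy : X.Adj x y)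
    (h : X.dist y g + 1 = X.dist x g) : IsGate X C y g := by
  refine ⟨hg.1, fun z hz hzg => ?_⟩
  have := hg.2 z hz hzg
  have := (hC hg.1 hz (Ne.symm hzg)).symm.dist_le_dist_add_one y
  have := hxy.dist_le_dist_add_one' z
  omega

theorem SimpleGraph.IsClique.exists_subset_maximal {s : Set V} (hs : X.IsClique s) :
    ∃ C, s ⊆ C ∧ Maximal X.IsClique C :=
  zorn_subset_nonempty {C | X.IsClique C}
    (fun c hc hchain _ => ⟨⋃₀ c, (Set.pairwise_sUnion hchain.directedOn).2 hc,
      fun _ => Set.subset_sUnion_of_mem⟩) s hs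

variable (hTC : TriangleCond X) (hQC : QuadCond X) (hK4 : NoInducedK4minus X) (hc : X.Connected)

include hTC hK4 in
theorem exists_isGate (hC : Maximal X.IsClique C) (hne : C.Nonempty) (x : V) :
    ∃ g, IsGate X C x g := by
  obtain ⟨g, hgC, hmin⟩ := exists_minimalFor_of_wellFoundedLT (· ∈ C) (X.dist x) hne
  refine ⟨g, hgC, fun z hz hzg => ?_⟩
  have hgz := hC.1 hgC hz (Ne.symm hzg)
  have := hgz.symm.dist_le_dist_add_one x
  by_contra hz'
  have heq : X.dist x g = X.dist x z := by
    have := hmin hz (by omega)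
    omega
  -- a common neighbour `t` of `g` and `z` closer to `x` lies outside `C`, so by maximality it
  -- misses some `b ∈ C`, and `g, z, t, b` is an induced `K₄⁻`
  obtain ⟨t, htg, htz, ht⟩ := hTC x g z hgz heq
  have htC : t ∉ C := fun htC => by
    have := hmin htC (by omega)
    omega
  have htC_adj : ∀ b ∈ C, t ≠ b → X.Adj t b := fun b hb htb => by
    by_contra htb'
    have hbg : b ≠ g := by rintro rfl; exact htb' htg
    have hbz : b ≠ z := by rintro rfl; exact htb' htz
    exact hK4 ⟨g, z, t, b, hgz, htg.symm, hC.1 hgC hb (Ne.symm hbg), htz.symm,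
      hC.1 hz hb (Ne.symm hbz), htb, htb'⟩
  exact htC <|
    hC.2 (isClique_insert.2 ⟨hC.1, htC_adj⟩) (Set.subset_insert t C) (Set.mem_insert t C)

theorem mem_hyperplane_of_isClique (hC : X.IsClique C) {u v p q : V} (hu : u ∈ C)
    (hv : v ∈ C) (hp : p ∈ C) (hq : q ∈ C) (huv : u ≠ v) (hpq : p ≠ q) :
    s(p, q) ∈ hyperplane X s(u, v) := by
  have step : ∀ {x y z}, x ∈ C → y ∈ C → z ∈ C → x ≠ y → y ≠ z →
      s(y, z) ∈ hyperplane X s(x, y) := fun {x y z} hx hy hz hxy hyz => by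
    by_cases hxz : x = z
    · rw [hxz, Sym2.eq_swap]
      exact mem_hyperplane_self _
    · exact .single (Or.inl ⟨x, y, z, hC hx hy hxy, hC hy hz hyz, hC hx hz hxz, rfl, rfl⟩)
  by_cases hvp : v = p
  · subst hvp
    exact step hu hv hq huv hpq
  · exact (step hu hv hp huv hvp).trans (step hv hp hq hvp hpq)

include hQC hc in
theorem mem_hyperplane_of_isGate_ne (hC : X.IsClique C) (hxy : X.Adj x y) (hg : IsGate X C x g)
    (hg' : IsGate X C y g') (hne : g ≠ g') : s(x, y) ∈ hyperplane X s(g, g') := by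
  obtain ⟨n, hn⟩ : ∃ n, X.dist x g = n := ⟨_, rfl⟩
  induction n generalizing x y with
  | zero =>
    have := hg.dist_eq_of_adj hg' hxy hne
    obtain rfl := hc.dist_eq_zero_iff.1 hn
    obtain rfl := hc.dist_eq_zero_iff.1 (by omega : X.dist y g' = 0)
    exact mem_hyperplane_self _
  | succ k ih =>
    have := hg.dist_eq_of_adj hg' hxy hne
    have := hg.2 g' hg'.1 (Ne.symm hne)
    obtain ⟨x', hxx', hx'g⟩ := hc.exists_adj_dist_eq_of_dist_eq_add_one hn
    have hgx' := hg.of_adj hC hxx' (by omega)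
    have hx'_ne : x' ≠ y := by rintro rfl; exact hne (hgx'.unique hg')
    have hx'_nadj : ¬X.Adj x' y := fun h => by have := hgx'.dist_eq_of_adj hg' h hne; omega
    have := hgx'.2 g' hg'.1 (Ne.symm hne)
    have := dist_comm (G := X) (u := g') (v := x)
    have := dist_comm (G := X) (u := g') (v := x')
    have := dist_comm (G := X) (u := g') (v := y)
    -- as in the halfspace case: the quadrangle condition at `g'` gives the square `x' w y x`
    obtain ⟨w, hwx', hwy, hw⟩ :=
      hQC g' x' y x hxx' hxy (hc.dist_eq_two hxx'.symm hxy hx'_ne hx'_nadj) (by omega) (by omega)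
    have := dist_comm (G := X) (u := g') (v := w)
    have hgw := hg'.of_adj hC hwy.symm (by omega)
    have hw_ne : w ≠ x := by rintro rfl; omega
    have hw_nadj : ¬X.Adj w x := fun h => by have := h.symm.dist_le_dist_add_one' g'; omega
    have hsq : IsInducedSquare X x' w y x :=
      ⟨hwx'.symm, hwy, hxy.symm, hxx', hx'_ne, hx'_nadj, hw_ne, hw_nadj⟩
    rw [Sym2.eq_swap (a := x)]
    exact (ih hwx'.symm hgx' hgw hx'g).tail hsq.edgeRel

variable {u v w : V}

include hTC hQC hK4 hc in
theorem IsGate.eq_of_reachable_deleteEdges (hC : Maximal X.IsClique C) (hu : u ∈ C)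
    (hv : v ∈ C) (huv : u ≠ v) (h : (X.deleteEdges (hyperplane X s(u, v))).Reachable x y)
    (hg : IsGate X C x g) (hg' : IsGate X C y g') : g = g' := by
  obtain ⟨w⟩ := h
  induction w generalizing g with
  | nil => exact hg.unique hg'
  | @cons x z y hxz _ ih =>
    obtain ⟨hxz, hJ⟩ := (deleteEdges_adj ..).1 hxz
    obtain ⟨g₁, hg₁⟩ := exists_isGate hTC hK4 hC ⟨u, hu⟩ z
    obtain rfl : g = g₁ := by
      by_contra hne
      exact hJ (ReflTransGen.trans (mem_hyperplane_of_isClique hC.1 hu hv hg.1 hg₁.1 huv hne)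
        (mem_hyperplane_of_isGate_ne hQC hc hC.1 hxz hg hg₁ hne))
    exact ih hg₁ hg'

include hTC hQC hK4 hc in
theorem sectors_ne_pair_of_adj (huv : X.Adj u v) (hvw : X.Adj v w) (huw : X.Adj u w)
    (S₁ S₂ : Set V) :
    {S | IsSectorOf X (hyperplane X s(u, v)) S} ≠ {S₁, S₂} := by
  intro hS
  have htri : X.IsClique {u, v, w} := by
    rw [isClique_insert, isClique_pair]
    refine ⟨fun _ => hvw, ?_⟩
    simp only [Set.mem_insert_iff, Set.mem_singleton_iff]
    rintro b (rfl | rfl) _ <;> assumption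
  obtain ⟨C, hsub, hC⟩ := htri.exists_subset_maximal
  have hu : u ∈ C := hsub (by simp)
  have hv : v ∈ C := hsub (by simp)
  have hw : w ∈ C := hsub (by simp)
  set R := (X.deleteEdges (hyperplane X s(u, v))).Reachable
  have hsector : ∀ x, {y | R x y} = S₁ ∨ {y | R x y} = S₂ := fun x => by
    have : {y | R x y} ∈ ({S₁, S₂} : Set (Set V)) := hS ▸ ⟨x, rfl⟩
    simpa only [Set.mem_insert_iff, Set.mem_singleton_iff] using this
  have hne : ∀ {x y}, x ∈ C → y ∈ C → x ≠ y → {z | R x z} ≠ {z | R y z} :=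
    fun {x y} hx hy hxy h => hxy <|
      IsGate.eq_of_reachable_deleteEdges hTC hQC hK4 hc hC hu hv huv.ne
        (h ▸ Reachable.refl _ : _ ∈ {z | R x z}) (isGate_self hC.1 hx) (isGate_self hC.1 hy)
  have h₁ := hne hu hv huv.ne
  have h₂ := hne hv hw hvw.ne
  have h₃ := hne hu hw huw.ne
  rcases hsector u with hu | hu <;> rcases hsector v with hv | hv <;>
    rcases hsector w with hw | hw <;> simp_all

end Gates

end

/-- A quasi-median graph is median iff it is triangle-free, which holds iff every
hyperplane delimits exactly two sectors. -/
theorem stmt4 (X : SimpleGraph V) (hX : QuasiMedian X) :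
    (MedianGraph X ↔ ¬ ∃ a b c : V, X.Adj a b ∧ X.Adj b c ∧ X.Adj a c) ∧
      ((¬ ∃ a b c : V, X.Adj a b ∧ X.Adj b c ∧ X.Adj a c) ↔
        ∀ J : Set (Sym2 V), IsHyperplane X J →
          ∃ S₁ S₂ : Set V, S₁ ≠ S₂ ∧ {S : Set V | IsSectorOf X J S} = {S₁, S₂}) := by
  obtain ⟨hc, hTC, hQC, hK23, hK4⟩ := hX
  refine ⟨⟨?_, fun hT => ?_⟩, ⟨fun hT J hJ => ?_, ?_⟩⟩
  · rintro ⟨-, hmed⟩ ⟨a, b, c, hab, hbc, hac⟩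
    obtain ⟨m, hm, -⟩ := hmed a b c
    exact not_isMedianOf_of_adj hab hbc hac m hm
  · exact medianGraph_of_cliqueFree_three (cliqueFree_three_of_not_exists hT) hTC hQC hK23 hc
  · exact exists_sectors_eq_pair (cliqueFree_three_of_not_exists hT) hTC hQC hK23 hc hJ
  · rintro hsec ⟨u, v, w, huv, hvw, huw⟩
    obtain ⟨S₁, S₂, -, hS⟩ := hsec _ ⟨s(u, v), huv, rfl⟩
    exact sectors_ne_pair_of_adj hTC hQC hK4 hc huv hvw huw S₁ S₂ hS
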